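/- Let η, β : W → A, f : Σ_A W → X with ι_X = f∘θ and secat(ι_X) ≤ n, and let σ : X → G_n(ι_X) be any homotopy section of g_n. Let H_n be the homotopy pullback of g_n and f with projections f_n : H_n → G_n(ι_X) and η_n^W : H_n → Σ_A W, let θ_n^W = (ω_n, id) : Σ_A W → H_n be the whisker map, let σ̄ : Σ_A W → H_n be the whisker map with f_n∘σ̄ ≃ σ∘f and η_n^W∘σ̄ ≃ id (arising since, by the prism lemma, the homotopy pullback of σ along f_n is Σ_A W), and let Q be the homotopy pullback of θ_n^W and σ̄ with projections π, π′ : Q → Σ_A W (which satisfy π ≃ π′). Then the following are equivalent: (i) σ∘f ≃ ω_n; (ii) π admits a homotopy section; (iii) π is a homotopy epimorphism; (iv) θ_n^W ≃ σ̄. -/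

import Mathlib

/-!
Framework: pointed/topological homotopy theory à la Doeraene–El Haouari.
Concrete models of homotopy pullbacks (path space construction) and homotopy
pushouts (double mapping cylinders), the Ganea construction of a map,
sectional category `secat`, relative category `relcat` (and of order `k`,
`relcatk`), relative suspensions, the whisker maps `ω_n`, the Hopf category
`hcat` and the strong Hopf category `Hcat`.
-/

noncomputable section

open ContinuousMap unitInterval

universe u

section Basic

variable {W A B X Y P Z' : Type u} [TopologicalSpace W] [TopologicalSpace A] [TopologicalSpace B]
  [TopologicalSpace X] [TopologicalSpace Y] [TopologicalSpace P] [TopologicalSpace Z']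

/-- `f : X → Y` is a homotopy equivalence. -/
def IsHEquiv {X Y : Type u} [TopologicalSpace X] [TopologicalSpace Y] (f : C(X, Y)) : Prop :=
  ∃ g : C(Y, X), (f.comp g).Homotopic (ContinuousMap.id Y) ∧ (g.comp f).Homotopic (ContinuousMap.id X)

/-- `p` is a homotopy epimorphism: `u ∘ p ≃ v ∘ p` implies `u ≃ v`. -/
def IsHEpi {X Y : Type u} [TopologicalSpace X] [TopologicalSpace Y] (p : C(X, Y)) : Prop :=
  ∀ (Z : TopCat.{u}) (u v : C(Y, Z)), (u.comp p).Homotopic (v.comp p) → u.Homotopic v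

/-- The concrete homotopy pullback of `f : A → X` and `g : B → X`:
points of `A` and `B` together with a path joining their images. -/
@[reducible] def HPb (f : C(A, X)) (g : C(B, X)) : Type u :=
  {p : A × C(unitInterval, X) × B // p.2.1 0 = f p.1 ∧ p.2.1 1 = g p.2.2}

/-- First projection of the homotopy pullback. -/
def HPb.pr1 (f : C(A, X)) (g : C(B, X)) : C(HPb f g, A) :=
  ⟨fun p => p.1.1, (continuous_fst.comp continuous_subtype_val)⟩

/-- Second projection of the homotopy pullback. -/
def HPb.pr2 (f : C(A, X)) (g : C(B, X)) : C(HPb f g, B) :=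
  ⟨fun p => p.1.2.2, (continuous_snd.comp (continuous_snd.comp continuous_subtype_val))⟩

/-- The canonical homotopy `f ∘ pr1 ≃ g ∘ pr2` on the homotopy pullback,
given by evaluating the path component. -/
def HPb.evalHomotopy (f : C(A, X)) (g : C(B, X)) :
    ContinuousMap.Homotopy (f.comp (HPb.pr1 f g)) (g.comp (HPb.pr2 f g)) where
  toFun := fun q => q.2.1.2.1 q.1
  continuous_toFun := by
    have h1 : Continuous fun q : unitInterval × HPb f g => ((q.2.1.2.1 : C(unitInterval, X)), q.1) :=
      ((continuous_fst.comp (continuous_snd.comp (continuous_subtype_val.comp continuous_snd)))).prodMk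
        continuous_fst
    exact continuous_eval.comp h1
  map_zero_left := fun p => p.2.1
  map_one_left := fun p => p.2.2

/-- The whisker map into the homotopy pullback induced by a homotopy commutative square. -/
def HPb.whisker (f : C(A, X)) (g : C(B, X)) (p : C(Z', A)) (q : C(Z', B))
    (H : ContinuousMap.Homotopy (f.comp p) (g.comp q)) : C(Z', HPb f g) where
  toFun := fun z => ⟨(p z, ((H.toContinuousMap.comp ContinuousMap.prodSwap).curry z, q z)),
    ⟨H.apply_zero z, H.apply_one z⟩⟩
  continuous_toFun := by
    apply Continuous.subtype_mk
    exact (map_continuous p).prodMk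
      (((map_continuous (H.toContinuousMap.comp ContinuousMap.prodSwap).curry)).prodMk
        (map_continuous q))

/-- A homotopy commutative square is a homotopy pullback if some whisker map
to the concrete homotopy pullback is a homotopy equivalence. -/
def IsHPullback (f : C(A, X)) (g : C(B, X)) (p : C(Z', A)) (q : C(Z', B)) : Prop :=
  ∃ H : ContinuousMap.Homotopy (f.comp p) (g.comp q), IsHEquiv (HPb.whisker f g p q H)

/-- The gluing relation for the double mapping cylinder of `f : W → A` and `g : W → B`. -/
inductive DCylRel (f : C(W, A)) (g : C(W, B)) :
    (A ⊕ (B ⊕ W × unitInterval)) → (A ⊕ (B ⊕ W × unitInterval)) → Prop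
  | left (w : W) : DCylRel f g (Sum.inl (f w)) (Sum.inr (Sum.inr (w, 0)))
  | right (w : W) : DCylRel f g (Sum.inr (Sum.inl (g w))) (Sum.inr (Sum.inr (w, 1)))

/-- The double mapping cylinder: the concrete homotopy pushout of `f : W → A`, `g : W → B`. -/
@[reducible] def DCyl (f : C(W, A)) (g : C(W, B)) : Type u := Quot (DCylRel f g)

/-- Left leg of the double mapping cylinder. -/
def DCyl.inl (f : C(W, A)) (g : C(W, B)) : C(A, DCyl f g) :=
  ⟨fun a => Quot.mk _ (Sum.inl a), continuous_quot_mk.comp continuous_inl⟩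

/-- Right leg of the double mapping cylinder. -/
def DCyl.inr (f : C(W, A)) (g : C(W, B)) : C(B, DCyl f g) :=
  ⟨fun b => Quot.mk _ (Sum.inr (Sum.inl b)), continuous_quot_mk.comp (continuous_inr.comp continuous_inl)⟩

/-- The map out of a double mapping cylinder glued from `u`, `v` and a homotopy `u∘f ≃ v∘g`. -/
def DCyl.glue {f : C(W, A)} {g : C(W, B)} (u : C(A, P)) (v : C(B, P))
    (H : ContinuousMap.Homotopy (u.comp f) (v.comp g)) : C(DCyl f g, P) where
  toFun := Quot.lift (Sum.elim u (Sum.elim v (fun q => H (q.2, q.1))))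
    (by rintro x y (⟨w⟩ | ⟨w⟩)
        · exact (H.apply_zero w).symm
        · exact (H.apply_one w).symm)
  continuous_toFun := by
    apply continuous_quot_lift
    exact (map_continuous u).sumElim ((map_continuous v).sumElim
      ((H.toContinuousMap.continuous).comp continuous_swap))

/-- A homotopy commutative square is a homotopy pushout if some glued map
from the concrete double mapping cylinder is a homotopy equivalence. -/
def IsHPushout (f : C(W, A)) (g : C(W, B)) (u : C(A, P)) (v : C(B, P)) : Prop :=
  ∃ H : ContinuousMap.Homotopy (u.comp f) (v.comp g), IsHEquiv (DCyl.glue u v H)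

/-- A map `g` is relatively dominated by `f` (both defined on `B`). -/
def RelDominated {B Y X : Type u} [TopologicalSpace B] [TopologicalSpace Y] [TopologicalSpace X]
    (g : C(B, Y)) (f : C(B, X)) : Prop :=
  ∃ (φ : C(X, Y)) (sec : C(Y, X)), (φ.comp sec).Homotopic (ContinuousMap.id Y) ∧
    (φ.comp f).Homotopic g ∧ (sec.comp g).Homotopic f

end Basic

section Ganea

variable {A X : Type u} [TopologicalSpace A] [TopologicalSpace X]

/-- One stage of the Ganea construction. -/
structure GaneaAux (A X : Type u) [TopologicalSpace A] [TopologicalSpace X] where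
  /-- the space `G_n` -/
  G : Type u
  /-- its topology -/
  [topG : TopologicalSpace G]
  /-- the Ganea map `g_n : G_n → X` -/
  g : C(G, X)
  /-- the canonical map `α_n : A → G_n` -/
  α : C(A, G)

attribute [instance] GaneaAux.topG

/-- The Ganea construction of `ι : A → X`: `G_0 = A`, `g_0 = ι`, and `G_{n+1}` is the
homotopy pushout (double mapping cylinder) of the two projections of the homotopy
pullback `F_n` of `g_n` and `ι`. -/
def ganeaAux (ι : C(A, X)) : ℕ → GaneaAux A X
  | 0 => { G := A, g := ι, α := ContinuousMap.id A }
  | (n+1) =>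
    { G := DCyl (HPb.pr1 (ganeaAux ι n).g ι) (HPb.pr2 (ganeaAux ι n).g ι)
      g := DCyl.glue (ganeaAux ι n).g ι (HPb.evalHomotopy (ganeaAux ι n).g ι)
      α := DCyl.inr (HPb.pr1 (ganeaAux ι n).g ι) (HPb.pr2 (ganeaAux ι n).g ι) }

/-- The `n`-th Ganea space `G_n(ι)`. -/
def GaneaG (ι : C(A, X)) (n : ℕ) : Type u := (ganeaAux ι n).G

instance (ι : C(A, X)) (n : ℕ) : TopologicalSpace (GaneaG ι n) := (ganeaAux ι n).topG

/-- The `n`-th Ganea map `g_n : G_n(ι) → X`. -/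
def ganeaMap (ι : C(A, X)) (n : ℕ) : C(GaneaG ι n, X) := (ganeaAux ι n).g

/-- The canonical map `α_n : A → G_n(ι)`. -/
def ganeaAlpha (ι : C(A, X)) (n : ℕ) : C(A, GaneaG ι n) := (ganeaAux ι n).α

/-- The `n`-th homotopy fibre `F_n(ι)`: the homotopy pullback of `g_n` and `ι`. -/
def ganeaF (ι : C(A, X)) (n : ℕ) : Type u := HPb (ganeaMap ι n) ι

instance (ι : C(A, X)) (n : ℕ) : TopologicalSpace (ganeaF ι n) :=
  inferInstanceAs (TopologicalSpace (HPb (ganeaMap ι n) ι))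

/-- `β_n : F_n(ι) → G_n(ι)`. -/
def ganeaBeta (ι : C(A, X)) (n : ℕ) : C(ganeaF ι n, GaneaG ι n) := HPb.pr1 (ganeaMap ι n) ι

/-- `η_n : F_n(ι) → A`. -/
def ganeaEta (ι : C(A, X)) (n : ℕ) : C(ganeaF ι n, A) := HPb.pr2 (ganeaMap ι n) ι

/-- `γ_n : G_n(ι) → G_{n+1}(ι)`. -/
def ganeaGamma (ι : C(A, X)) (n : ℕ) : C(GaneaG ι n, GaneaG ι (n+1)) :=
  DCyl.inl (HPb.pr1 (ganeaAux ι n).g ι) (HPb.pr2 (ganeaAux ι n).g ι)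

/-- `γ_{k,k+m} : G_k(ι) → G_{k+m}(ι)`, the composite of the `γ_i`. -/
def ganeaGammaFrom (ι : C(A, X)) (k : ℕ) : (m : ℕ) → C(GaneaG ι k, GaneaG ι (k + m))
  | 0 => ContinuousMap.id _
  | (m+1) => (ganeaGamma ι (k+m)).comp (ganeaGammaFrom ι k m)

/-- The sectional category of `ι : A → X`: the least `n` such that `g_n : G_n(ι) → X`
admits a homotopy section. -/
def secat (ι : C(A, X)) : ℕ∞ :=
  sInf {n : ℕ∞ | ∃ m : ℕ, n = (m : ℕ∞) ∧ ∃ sec : C(X, GaneaG ι m),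
    ((ganeaMap ι m).comp sec).Homotopic (ContinuousMap.id X)}

/-- The relative category of `ι : A → X`: the least `n` such that `g_n : G_n(ι) → X`
admits a homotopy section `σ` with `σ ∘ ι ≃ α_n`. -/
def relcat (ι : C(A, X)) : ℕ∞ :=
  sInf {n : ℕ∞ | ∃ m : ℕ, n = (m : ℕ∞) ∧ ∃ sec : C(X, GaneaG ι m),
    ((ganeaMap ι m).comp sec).Homotopic (ContinuousMap.id X) ∧
    (sec.comp ι).Homotopic (ganeaAlpha ι m)}

/-- The relative category of order `k` of `ι : A → X`: the least `n (= k + m)` such that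
`g_n` admits a homotopy section `σ` with `σ ∘ g_k ≃ γ_{k,n}`. -/
def relcatk (ι : C(A, X)) (k : ℕ) : ℕ∞ :=
  sInf {n : ℕ∞ | ∃ m : ℕ, n = ((k + m : ℕ) : ℕ∞) ∧ ∃ sec : C(X, GaneaG ι (k + m)),
    ((ganeaMap ι (k + m)).comp sec).Homotopic (ContinuousMap.id X) ∧
    (sec.comp (ganeaMap ι k)).Homotopic (ganeaGammaFrom ι k m)}

/-- The Lusternik–Schnirelmann category of the pointed space `(X, x₀)`,
i.e. the relative category of `∗ → X`. -/
def ptcat (X : Type u) [TopologicalSpace X] (x₀ : X) : ℕ∞ :=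
  relcat (ContinuousMap.const PUnit.{u+1} x₀)

end Ganea

section RelSuspension

variable {W A X : Type u} [TopologicalSpace W] [TopologicalSpace A] [TopologicalSpace X]

/-- A relative suspension of `η, β : W → A`: a homotopy pushout of `η` and `β`
both of whose legs are the same map `θ : A → S`.  The structure records the
structure homotopy `K : θ∘η ≃ θ∘β` together with the fact that the glued
comparison map from the double mapping cylinder is a homotopy equivalence. -/
structure RelSusp (η β : C(W, A)) where
  /-- the total space `Σ_A W` -/
  S : Type u
  /-- its topology -/
  [topS : TopologicalSpace S]
  /-- the common leg `θ : A → Σ_A W` -/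
  θ : C(A, S)
  /-- the structure homotopy `θ∘η ≃ θ∘β` -/
  K : ContinuousMap.Homotopy (θ.comp η) (θ.comp β)
  /-- a homotopy inverse to the comparison map `DCyl η β → S` -/
  inv : C(S, DCyl η β)
  glue_inv : ((DCyl.glue θ θ K).comp inv).Homotopic (ContinuousMap.id S)
  inv_glue : (inv.comp (DCyl.glue θ θ K)).Homotopic (ContinuousMap.id (DCyl η β))

attribute [instance] RelSusp.topS

variable {η β : C(W, A)}

/-- Auxiliary: the swap-and-reverse map `W × I → I × W`. -/
def cylSwap : C(W × unitInterval, unitInterval × W) :=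
  ⟨fun p => (unitInterval.symm p.2, p.1),
    (unitInterval.continuous_symm.comp continuous_snd).prodMk continuous_fst⟩

/-- Auxiliary: the family of paths `t ↦ f (K (σ t, w))` from `ι(β w)` to `ι(η w)`. -/
def omegaPath (R : RelSusp η β) (f : C(R.S, X)) : C(W, C(unitInterval, X)) :=
  ContinuousMap.curry ((f.comp R.K.toContinuousMap).comp cylSwap)

/-- Auxiliary: the canonical map `W → F_0(ι)` underlying the whisker map `ω`. -/
def omegaF (R : RelSusp η β) (ι : C(A, X)) (f : C(R.S, X)) (hf : ∀ a, f (R.θ a) = ι a) :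
    C(W, ganeaF ι 0) where
  toFun := fun w => ⟨(β w, (omegaPath R f w, η w)), by
    constructor
    · show (omegaPath R f w) 0 = ι (β w)
      show f (R.K (unitInterval.symm 0, w)) = ι (β w)
      rw [unitInterval.symm_zero, R.K.apply_one]
      exact hf (β w)
    · show (omegaPath R f w) 1 = ι (η w)
      show f (R.K (unitInterval.symm 1, w)) = ι (η w)
      rw [unitInterval.symm_one, R.K.apply_zero]
      exact hf (η w)⟩
  continuous_toFun := by
    apply Continuous.subtype_mk
    exact (map_continuous β).prodMk ((map_continuous (omegaPath R f)).prodMk (map_continuous η))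

/-- The canonical comparison `DCyl η β → G_1(ι)` (the concrete model of `ω_1`). -/
def omegaDCyl (R : RelSusp η β) (ι : C(A, X)) (f : C(R.S, X)) (hf : ∀ a, f (R.θ a) = ι a) :
    C(DCyl η β, GaneaG ι 1) where
  toFun := Quot.lift (Sum.elim
      (fun a => ganeaAlpha ι 1 a)
      (Sum.elim (fun a => ganeaGamma ι 0 (ganeaAlpha ι 0 a))
        (fun q => Quot.mk _ (Sum.inr (Sum.inr (omegaF R ι f hf q.1, unitInterval.symm q.2))))))
    (by
      rintro x y (⟨w⟩ | ⟨w⟩)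
      · show ganeaAlpha ι 1 (η w) =
          Quot.mk _ (Sum.inr (Sum.inr (omegaF R ι f hf w, unitInterval.symm 0)))
        rw [unitInterval.symm_zero]
        exact Quot.sound (DCylRel.right (omegaF R ι f hf w))
      · show ganeaGamma ι 0 (ganeaAlpha ι 0 (β w)) =
          Quot.mk _ (Sum.inr (Sum.inr (omegaF R ι f hf w, unitInterval.symm 1)))
        rw [unitInterval.symm_one]
        exact Quot.sound (DCylRel.left (omegaF R ι f hf w)))
  continuous_toFun := by
    apply continuous_quot_lift
    apply Continuous.sumElim
    · exact map_continuous (ganeaAlpha ι 1)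
    apply Continuous.sumElim
    · exact (map_continuous (ganeaGamma ι 0)).comp (map_continuous (ganeaAlpha ι 0))
    · exact (continuous_quot_mk.comp (continuous_inr.comp continuous_inr)).comp
        (((map_continuous (omegaF R ι f hf)).comp continuous_fst).prodMk
          (unitInterval.continuous_symm.comp continuous_snd))

/-- The whisker map `ω_1 : Σ_A W → G_1(ι)`. -/
def omega1 (R : RelSusp η β) (ι : C(A, X)) (f : C(R.S, X)) (hf : ∀ a, f (R.θ a) = ι a) :
    C(R.S, GaneaG ι 1) :=
  (omegaDCyl R ι f hf).comp R.inv

/-- The whisker map `ω_{1+m} = γ_{1,1+m} ∘ ω_1 : Σ_A W → G_{1+m}(ι)`. -/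
def omega (R : RelSusp η β) (ι : C(A, X)) (f : C(R.S, X)) (hf : ∀ a, f (R.θ a) = ι a) (m : ℕ) :
    C(R.S, GaneaG ι (1 + m)) :=
  (ganeaGammaFrom ι 1 m).comp (omega1 R ι f hf)

/-- The Hopf category of `f : Σ_A W → X`: the least `n ≥ 1` such that
`g_n : G_n(ι_X) → X` (for `ι_X = f ∘ θ`) admits a homotopy section `σ` with `σ ∘ f ≃ ω_n`. -/
def hcat (R : RelSusp η β) {X : Type u} [TopologicalSpace X] (f : C(R.S, X)) : ℕ∞ :=
  sInf {n : ℕ∞ | ∃ m : ℕ, n = ((1 + m : ℕ) : ℕ∞) ∧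
    ∃ sec : C(X, GaneaG (f.comp R.θ) (1 + m)),
      ((ganeaMap (f.comp R.θ) (1 + m)).comp sec).Homotopic (ContinuousMap.id X) ∧
      (sec.comp f).Homotopic (omega R (f.comp R.θ) f (fun _ => rfl) m)}

/-- A chain of homotopy commutative cubes realizing `Hcat ≤ n`, defined by downward
recursion: `HcatChain R n ιn ζn` says that there are spaces `X_0, …, X_n = X`, maps
`ι_i : A → X_i` with `ι_0` a homotopy equivalence and `ι_n = ιn`, maps
`ζ_i : Σ_A W → X_i` with `ζ_n = ζn`, and for each `i < n` a homotopy commutative cube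
whose top face is the relative suspension square and whose bottom face is a homotopy
pushout as in the definition of the strong Hopf category. -/
def HcatChain (R : RelSusp η β) : (n : ℕ) → {X : Type u} → [TopologicalSpace X] →
    C(A, X) → C(R.S, X) → Prop
  | 0 => fun ιn _ =>
      ∃ lam : C(_, A), (ιn.comp lam).Homotopic (ContinuousMap.id _) ∧
        (lam.comp ιn).Homotopic (ContinuousMap.id A)
  | (n+1) => fun ιn ζn =>
      ∃ (X' : TopCat.{u}) (ι' : C(A, X')) (ζ' : C(R.S, X'))
        (Z : TopCat.{u}) (a : C(Z, A)) (z : C(Z, X')) (w : C(W, Z)) (χ : C(X', _)),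
        IsHPushout a z ιn χ ∧
        (a.comp w).Homotopic η ∧
        (z.comp w).Homotopic (ι'.comp β) ∧
        (ζn.comp R.θ).Homotopic ιn ∧
        (ζn.comp R.θ).Homotopic (χ.comp ι') ∧
        HcatChain R n ι' ζ'

/-- `Hcat f ≤ n`. -/
def HcatLe (R : RelSusp η β) {X : Type u} [TopologicalSpace X] (f : C(R.S, X)) (n : ℕ) : Prop :=
  1 ≤ n ∧ ∃ ιn : C(A, X), HcatChain R n ιn f

/-- The strong Hopf category of `f : Σ_A W → X`. -/
def Hcat (R : RelSusp η β) {X : Type u} [TopologicalSpace X] (f : C(R.S, X)) : ℕ∞ :=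
  sInf {n : ℕ∞ | ∃ m : ℕ, n = (m : ℕ∞) ∧ HcatLe R f m}

end RelSuspension

section Spaces

variable {A Z : Type u} [TopologicalSpace A] [TopologicalSpace Z]

/-- The join `A ⋈ B`: the homotopy pushout (double mapping cylinder) of the two
projections `A ← A × B → B`. -/
@[reducible] def Join (A B : Type u) [TopologicalSpace A] [TopologicalSpace B] : Type u :=
  DCyl (⟨Prod.fst, continuous_fst⟩ : C(A × B, A)) (⟨Prod.snd, continuous_snd⟩ : C(A × B, B))

/-- The iterated join of `n+1` copies of `A` (as a bundled space). -/
def IterJoinT (A : Type u) [TopologicalSpace A] : ℕ → TopCat.{u}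
  | 0 => TopCat.of A
  | (n+1) => TopCat.of (Join ↥(IterJoinT A n) A)

/-- The iterated join of `n+1` copies of `A`. -/
@[reducible] def IterJoin (A : Type u) [TopologicalSpace A] (n : ℕ) : Type u := ↥(IterJoinT A n)

/-- Gluing relation for the wedge `A ∨ A`. -/
inductive WedgeRel (A : Type u) (a₀ : A) : (A ⊕ A) → (A ⊕ A) → Prop
  | basept : WedgeRel A a₀ (Sum.inl a₀) (Sum.inr a₀)

/-- The wedge `A ∨ A` of two copies of the pointed space `(A, a₀)`. -/
@[reducible] def Wedge (A : Type u) [TopologicalSpace A] (a₀ : A) : Type u := Quot (WedgeRel A a₀)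

/-- `pr_1 : A ∨ A → A`, collapsing the second wedge summand. -/
def Wedge.pr1 (a₀ : A) : C(Wedge A a₀, A) :=
  ⟨Quot.lift (Sum.elim id (fun _ => a₀)) (by rintro x y ⟨⟩; rfl),
    continuous_quot_lift _ (continuous_id.sumElim continuous_const)⟩

/-- `pr_2 : A ∨ A → A`, collapsing the first wedge summand. -/
def Wedge.pr2 (a₀ : A) : C(Wedge A a₀, A) :=
  ⟨Quot.lift (Sum.elim (fun _ => a₀) id) (by rintro x y ⟨⟩; rfl),
    continuous_quot_lift _ (continuous_const.sumElim continuous_id)⟩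

/-- The inclusion `t₁ : A ∨ A → A × A` of the wedge in the product. -/
def Wedge.incl (a₀ : A) : C(Wedge A a₀, A × A) :=
  ⟨Quot.lift (Sum.elim (fun x => (x, a₀)) (fun x => (a₀, x))) (by rintro x y ⟨⟩; rfl),
    continuous_quot_lift _ ((continuous_id.prodMk continuous_const).sumElim
      (continuous_const.prodMk continuous_id))⟩

/-- The (unreduced) suspension `ΣZ`, as the double mapping cylinder of `∗ ← Z → ∗`. -/
@[reducible] def Susp (Z : Type u) [TopologicalSpace Z] : Type u :=
  DCyl (ContinuousMap.const Z (PUnit.unit : PUnit.{u+1})) (ContinuousMap.const Z PUnit.unit)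

/-- The north pole of the suspension, used as its basepoint. -/
def Susp.north (Z : Type u) [TopologicalSpace Z] : Susp Z := Quot.mk _ (Sum.inl PUnit.unit)

/-- The map `ι_∗ : A → ∗`. -/
def iotaStar (A : Type u) [TopologicalSpace A] : C(A, PUnit.{u+1}) :=
  ContinuousMap.const A PUnit.unit

/-- The `n`-sphere `S^n ⊆ ℝ^{n+1}`. -/
@[reducible] def Sph (n : ℕ) : Type :=
  ↥(Metric.sphere (0 : EuclideanSpace ℝ (Fin (n+1))) 1)

end Spaces

section CWCompat

open CategoryTheory

/-- The `n`-dimensional sphere (old Mathlib `RelativeCWComplex.sphere`). -/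
def RelativeCWComplex.sphere (n : ℤ) : TopCat.{u} :=
  TopCat.of (ULift.{u} (Metric.sphere (0 : EuclideanSpace ℝ (Fin (n + 1).toNat)) 1))

/-- The `n`-dimensional closed disk (old Mathlib `RelativeCWComplex.disk`). -/
def RelativeCWComplex.disk (n : ℤ) : TopCat.{u} :=
  TopCat.of (ULift.{u} (Metric.closedBall (0 : EuclideanSpace ℝ (Fin n.toNat)) 1))

/-- The inclusion of the sphere into the disk (old Mathlib `RelativeCWComplex.sphereInclusion`). -/
def RelativeCWComplex.sphereInclusion (n : ℤ) :
    RelativeCWComplex.sphere.{u} n ⟶ RelativeCWComplex.disk.{u} (n + 1) :=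
  TopCat.ofHom ⟨fun p => ⟨⟨p.down.1, le_of_eq p.down.2⟩⟩, by fun_prop⟩

/-- Attaching generalized cells (old Mathlib `RelativeCWComplex.AttachGeneralizedCells`). -/
structure RelativeCWComplex.AttachGeneralizedCells {S D : TopCat.{u}} (f : S ⟶ D)
    (X X' : TopCat.{u}) where
  cells : Type u
  attachMaps : cells → (S ⟶ X)
  iso_pushout : X' ≅ Limits.pushout (Limits.Sigma.desc attachMaps) (Limits.Sigma.map fun _ ↦ f)

/-- Attaching cells (old Mathlib `RelativeCWComplex.AttachCells`). -/
abbrev RelativeCWComplex.AttachCells (n : ℤ) :=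
  RelativeCWComplex.AttachGeneralizedCells (RelativeCWComplex.sphereInclusion.{u} n)

/-- Relative CW-complex (old Mathlib, December 2024). -/
structure RelativeCWComplex where
  sk : ℕ → TopCat.{u}
  attachCells (n : ℕ) : RelativeCWComplex.AttachCells ((n : ℤ) - 1) (sk n) (sk (n + 1))

/-- CW-complex (old Mathlib, December 2024). -/
structure CWComplex extends RelativeCWComplex.{u} where
  isEmpty_sk_zero : IsEmpty (sk 0)

/-- Inclusion into the result of attaching generalized cells. -/
def RelativeCWComplex.AttachGeneralizedCells.inclusion {S D : TopCat.{u}} {f : S ⟶ D}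
    {X X' : TopCat.{u}} (att : RelativeCWComplex.AttachGeneralizedCells f X X') : X ⟶ X' :=
  Limits.pushout.inl _ _ ≫ att.iso_pushout.inv

/-- Skeleton inclusion. -/
def RelativeCWComplex.skInclusion (X : RelativeCWComplex.{u}) (n : ℕ) : X.sk n ⟶ X.sk (n + 1) :=
  (X.attachCells n).inclusion

/-- The topological space of a relative CW-complex. -/
def RelativeCWComplex.toTopCat (X : RelativeCWComplex.{u}) : TopCat.{u} :=
  Limits.colimit (Functor.ofSequence (RelativeCWComplex.skInclusion X))

end CWCompat

section Connectivity

/-- The boundary inclusion `S^{k-1} → D^k`. -/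
def diskIncl (k : ℕ) : C(↥(Metric.sphere (0 : EuclideanSpace ℝ (Fin k)) 1),
    ↥(Metric.closedBall (0 : EuclideanSpace ℝ (Fin k)) 1)) :=
  ⟨fun x => ⟨x.1, Metric.sphere_subset_closedBall x.2⟩,
    Continuous.subtype_mk continuous_subtype_val _⟩

/-- `ι : A → X` is a `c`-connected map: for all `k ≤ c`, every strictly commutative
square on the pair `(D^k, S^{k-1})` admits a lift which is exact on the boundary and
commutes up to homotopy rel the boundary sphere. -/
def IsConnMap (c : ℕ) {A X : Type u} [TopologicalSpace A] [TopologicalSpace X]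
    (ι : C(A, X)) : Prop :=
  ∀ k : ℕ, k ≤ c →
    ∀ (v : C(↥(Metric.closedBall (0 : EuclideanSpace ℝ (Fin k)) 1), X))
      (u : C(↥(Metric.sphere (0 : EuclideanSpace ℝ (Fin k)) 1), A)),
      v.comp (diskIncl k) = ι.comp u →
      ∃ w : C(↥(Metric.closedBall (0 : EuclideanSpace ℝ (Fin k)) 1), A),
        w.comp (diskIncl k) = u ∧
        (ι.comp w).HomotopicRel v (Set.range (diskIncl k))

/-- The space `S` carries a CW-structure all of whose cells have dimension `< d`. -/
def IsCWOfDimLt (S : Type u) [TopologicalSpace S] (d : ℕ) : Prop :=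
  ∃ (K : CWComplex.{u}) (_ : S ≃ₜ ↥(RelativeCWComplex.toTopCat K.toRelativeCWComplex)),
    ∀ j : ℕ, d ≤ j → IsEmpty ((K.attachCells j).cells)

/-- The space `S` carries some CW-structure. -/
def IsCW (S : Type u) [TopologicalSpace S] : Prop :=
  ∃ (K : CWComplex.{u}), Nonempty (S ≃ₜ ↥(RelativeCWComplex.toTopCat K.toRelativeCWComplex))

end Connectivity

/-!
For any two maps `u v : Z → E` with homotopy pullback `Q` and projections `π, π'`, a
homotopy `u ≃ v` gives a strict section of `π`, a homotopy section makes `π` a homotopy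
epimorphism, and when `π ≃ π'` we have `u ∘ π ≃ v ∘ π' ≃ v ∘ π`, so a homotopy epimorphism
`π` forces `u ≃ v`. Here `π ≃ π'` because `η_n^W` is a homotopy retraction of both `θ_n^W`
and `σ̄`. This gives (ii) ⇔ (iii) ⇔ (iv), and (iv) ⇒ (i) follows by composing with `f_n`.

For (i) ⇒ (iv), let `hs : g σ ≃ id`. A point `(a, P, b)` of the homotopy pullback of `g`
and `f` slides along homotopies `a ≃ σ f b'` and `b ≃ b'` to a point `(σ f b', R, b')`.
Any two such points are homotopic: for the loop `L = hs⁻¹ · R` at `f b'`, the homotopy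
`t ↦ (σ L(t), hs(L(t)) · L|[t,1], b')` joins `(σ f b', hs · L, b')` to
`(σ f b', hs · 1, b')`, and `hs · L`, like `R`, is a reparametrisation of `L`. So a map `u`
with `pr1 u ≃ σ f (pr2 u)` is determined up to homotopy by `pr2 u`; both `θ_n^W = (ω_n, id)`
and `σ̄` are such maps once `ω_n ≃ σ f`.
-/

theorem ContinuousMap.homotopic_curry_zero_one {Z Y : Type*} [TopologicalSpace Z]
    [TopologicalSpace Y] (F : C(I × Z, Y)) : (F.curry 0).Homotopic (F.curry 1) :=
  ⟨{ toContinuousMap := F, map_zero_left := fun _ => rfl, map_one_left := fun _ => rfl }⟩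

namespace ContinuousMap.Homotopy

variable {Z Y : Type*} [TopologicalSpace Z] [TopologicalSpace Y] {y₀ y₁ : C(Z, Y)}

def initialSegment (H : Homotopy y₀ y₁) : Homotopy (y₀.comp .snd) H.toContinuousMap where
  toFun x := H (min x.1 x.2.1, x.2.2)
  map_zero_left x := by simp
  map_one_left x := by simp [unitInterval.le_one']

def finalSegment (H : Homotopy y₀ y₁) : Homotopy H.toContinuousMap (y₁.comp .snd) where
  toFun x := H (max x.1 x.2.1, x.2.2)
  map_zero_left x := by simp
  map_one_left x := by simp [unitInterval.le_one']

@[simp] theorem initialSegment_apply (H : Homotopy y₀ y₁) (s t : I) (z : Z) :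
    H.initialSegment (s, t, z) = H (min s t, z) := rfl

@[simp] theorem finalSegment_apply (H : Homotopy y₀ y₁) (s t : I) (z : Z) :
    H.finalSegment (s, t, z) = H (max s t, z) := rfl

end ContinuousMap.Homotopy

namespace HPb

variable {Z G X Y : Type u} [TopologicalSpace Z] [TopologicalSpace G] [TopologicalSpace X]
  [TopologicalSpace Y] {g : C(G, X)} {f : C(Y, X)}

theorem hom_ext {u v : C(Z, HPb g f)} (h₁ : ∀ z, pr1 g f (u z) = pr1 g f (v z))
    (h₂ : ∀ z, pr2 g f (u z) = pr2 g f (v z))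
    (h : ∀ t z, evalHomotopy g f (t, u z) = evalHomotopy g f (t, v z)) : u = v :=
  ContinuousMap.ext fun z =>
    Subtype.ext (Prod.ext (h₁ z) (Prod.ext (ContinuousMap.ext fun t => h t z) (h₂ z)))

theorem whisker_pr1_pr2 (u : C(Z, HPb g f)) :
    whisker g f ((pr1 g f).comp u) ((pr2 g f).comp u) ((evalHomotopy g f).compContinuousMap u) =
      u :=
  hom_ext (fun _ => rfl) (fun _ => rfl) (fun _ _ => rfl)

theorem homotopic_of_reparam {u v : C(Z, HPb g f)} (Γ : C(I × Z, X)) {φ ψ : C(I, I)}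
    (h₀ : φ 0 = ψ 0) (h₁ : φ 1 = ψ 1)
    (hpr1 : ∀ z, pr1 g f (u z) = pr1 g f (v z)) (hpr2 : ∀ z, pr2 g f (u z) = pr2 g f (v z))
    (hu : ∀ t z, evalHomotopy g f (t, u z) = Γ (φ t, z))
    (hv : ∀ t z, evalHomotopy g f (t, v z) = Γ (ψ t, z)) : u.Homotopic v := by
  let mix : I → I → I := fun r t => Set.projIcc 0 1 zero_le_one ((1 - r) * φ t + r * ψ t)
  have mix_zero (t : I) : mix 0 t = φ t := by simp [mix]
  have mix_one (t : I) : mix 1 t = ψ t := by simp [mix]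
  have mix_of_eq (r : I) {t : I} (h : φ t = ψ t) : mix r t = φ t := by
    simp only [mix, ← h, ← add_mul, sub_add_cancel, one_mul, Set.projIcc_val]
  let P : ContinuousMap.Homotopy (g.comp (((pr1 g f).comp u).comp .snd))
      (f.comp (((pr2 g f).comp u).comp .snd)) :=
    { toFun := fun x => Γ (mix x.2.1 x.1, x.2.2)
      map_zero_left := fun x => by
        simp only [mix_of_eq _ h₀, ← hu, (evalHomotopy g f).apply_zero]; rfl
      map_one_left := fun x => by
        simp only [mix_of_eq _ h₁, ← hu, (evalHomotopy g f).apply_one]; rfl }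
  have h₀ : (whisker g f _ _ P).curry 0 = u :=
    hom_ext (fun _ => rfl) (fun _ => rfl) fun t z => by
      show Γ (mix 0 t, z) = _
      rw [mix_zero, hu]
  have h₁ : (whisker g f _ _ P).curry 1 = v :=
    hom_ext hpr1 hpr2 fun t z => by
      show Γ (mix 1 t, z) = _
      rw [mix_one, hv]
  exact h₀ ▸ h₁ ▸ homotopic_curry_zero_one _

theorem homotopic_whisker_slide {a a₁ : C(Z, G)} {b b₁ : C(Z, Y)}
    (P : ContinuousMap.Homotopy (g.comp a) (f.comp b)) (A : ContinuousMap.Homotopy a a₁)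
    (B : ContinuousMap.Homotopy b b₁) :
    (whisker g f a b P).Homotopic (whisker g f a₁ b₁
      ((((ContinuousMap.Homotopy.refl g).comp A).symm.trans P).trans
        ((ContinuousMap.Homotopy.refl f).comp B))) := by
  -- at time `t`, back along `g ∘ A` to time `0`, through `P`, then along `f ∘ B` up to time `t`
  let Q := (((ContinuousMap.Homotopy.refl g).comp A.initialSegment).symm.trans
    (P.compContinuousMap .snd)).trans ((ContinuousMap.Homotopy.refl f).comp B.initialSegment)
  let F := whisker g f A.toContinuousMap B.toContinuousMap Q
  have h₀ : (whisker g f a b P).Homotopic (F.curry 0) := by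
    refine homotopic_of_reparam P.toContinuousMap (φ := .id _)
      (ψ := ⟨fun t => Set.projIcc 0 1 zero_le_one (4 * t - 1), by fun_prop⟩) ?_ ?_
      (fun z => (A.apply_zero z).symm) (fun z => (B.apply_zero z).symm) (fun _ _ => rfl) ?_
    · exact (Set.projIcc_of_le_left zero_le_one (by norm_num)).symm
    · exact (Set.projIcc_of_right_le zero_le_one (by norm_num)).symm
    · intro t z
      show Q (t, 0, z) = _
      simp only [Q, ContinuousMap.Homotopy.trans_apply]
      split_ifs with h h'
      · have h4 : 4 * (t : ℝ) - 1 ≤ 0 := by linarith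
        simp [Set.projIcc_of_le_left zero_le_one h4]
      · have h4 : 4 * (t : ℝ) - 1 ∈ Set.Icc 0 1 := ⟨by linarith, by linarith⟩
        simp [Set.projIcc_of_mem zero_le_one h4]
        congr 3
        ring
      · have h4 : 1 ≤ 4 * (t : ℝ) - 1 := by linarith
        simp [Set.projIcc_of_right_le zero_le_one h4]
  have h₁ : F.curry 1 = whisker g f a₁ b₁
      ((((ContinuousMap.Homotopy.refl g).comp A).symm.trans P).trans
        ((ContinuousMap.Homotopy.refl f).comp B)) :=
    hom_ext (fun z => A.apply_one z) (fun z => B.apply_one z) fun t z => by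
      show Q (t, 1, z) = ((((ContinuousMap.Homotopy.refl g).comp A).symm.trans P).trans
        ((ContinuousMap.Homotopy.refl f).comp B)) (t, z)
      simp [Q, ContinuousMap.Homotopy.trans_apply, unitInterval.le_one']
  exact h₀.trans (h₁ ▸ homotopic_curry_zero_one F)

theorem homotopic_whisker_of_section {s : C(X, G)}
    (hs : ContinuousMap.Homotopy (g.comp s) (ContinuousMap.id X)) {b : C(Z, Y)}
    (R R' : ContinuousMap.Homotopy (g.comp (s.comp (f.comp b))) (f.comp b)) :
    (whisker g f (s.comp (f.comp b)) b R).Homotopic (whisker g f (s.comp (f.comp b)) b R') := by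
  let hy : ContinuousMap.Homotopy (g.comp (s.comp (f.comp b))) (f.comp b) :=
    hs.compContinuousMap (f.comp b)
  suffices key : ∀ R, (whisker g f _ b R).Homotopic
      (whisker g f _ b (hy.trans (ContinuousMap.Homotopy.refl _))) from
    (key R).trans (key R').symm
  intro R
  let L := hy.symm.trans R
  let Q := (hs.compContinuousMap L.toContinuousMap).trans L.finalSegment
  let F := whisker g f (s.comp L.toContinuousMap) (b.comp .snd) Q
  have h₀ : (whisker g f _ b R).Homotopic (F.curry 0) := by
    refine homotopic_of_reparam L.toContinuousMap
      (φ := ⟨fun t => Set.projIcc 0 1 zero_le_one ((1 + t) / 2), by fun_prop⟩)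
      (ψ := ⟨fun t => Set.projIcc 0 1 zero_le_one (max (1 / 2 - t) (2 * t - 1)), by fun_prop⟩)
      ?_ ?_ (fun z => congrArg s (L.apply_zero z).symm) (fun _ => rfl) ?_ ?_
    · show Set.projIcc 0 1 zero_le_one _ = Set.projIcc 0 1 zero_le_one _
      norm_num
    · show Set.projIcc 0 1 zero_le_one _ = Set.projIcc 0 1 zero_le_one _
      norm_num
    · intro t z
      show R (t, z) = L (Set.projIcc 0 1 zero_le_one ((1 + t) / 2), z)
      have hmem : (1 + (t : ℝ)) / 2 ∈ Set.Icc (0 : ℝ) 1 :=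
        ⟨by linarith [t.2.1], by linarith [t.2.2]⟩
      rw [Set.projIcc_of_mem zero_le_one hmem, ContinuousMap.Homotopy.trans_apply]
      split_ifs with h
      · change (1 + (t : ℝ)) / 2 ≤ 1 / 2 at h
        obtain rfl : t = 0 := Subtype.ext (le_antisymm (by push_cast; linarith) t.2.1)
        rw [R.apply_zero]
        convert (hy.symm.apply_one z).symm using 3
        ext
        norm_num
      · exact congrArg R (Prod.ext (Subtype.ext (by simp; ring)) rfl)
    · intro t z
      show Q (t, 0, z) = L (Set.projIcc 0 1 zero_le_one (max (1 / 2 - t) (2 * t - 1)), z)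
      erw [ContinuousMap.Homotopy.trans_apply]
      split_ifs with h
      · change (t : ℝ) ≤ 1 / 2 at h
        have hmem : 1 / 2 - (t : ℝ) ∈ Set.Icc (0 : ℝ) 1 :=
          ⟨by linarith, by linarith [t.2.1]⟩
        rw [max_eq_left (by linarith), Set.projIcc_of_mem zero_le_one hmem,
          ContinuousMap.Homotopy.trans_apply,
          dif_pos (by change 1 / 2 - (t : ℝ) ≤ 1 / 2; linarith [t.2.1])]
        show hs (_, L (0, z)) = hs (_, f (b z))
        rw [L.apply_zero]
        exact congrArg hs (Prod.ext (Subtype.ext (by simp; ring)) rfl)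
      · change ¬(t : ℝ) ≤ 1 / 2 at h
        have hmem : 2 * (t : ℝ) - 1 ∈ Set.Icc (0 : ℝ) 1 :=
          ⟨by linarith, by linarith [t.2.2]⟩
        rw [max_eq_right (by linarith), Set.projIcc_of_mem zero_le_one hmem]
        show L (max _ 0, z) = _
        rw [max_eq_left unitInterval.nonneg']
  have h₁ : F.curry 1 = whisker g f _ b (hy.trans (ContinuousMap.Homotopy.refl _)) :=
    hom_ext (fun z => congrArg s (L.apply_one z)) (fun _ => rfl) fun t z => by
      show Q (t, 1, z) = (hy.trans (ContinuousMap.Homotopy.refl _)) (t, z)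
      erw [ContinuousMap.Homotopy.trans_apply, ContinuousMap.Homotopy.trans_apply]
      split_ifs
      · show hs (_, L (1, z)) = hs (_, f (b z))
        rw [L.apply_one]
        rfl
      · show L (max _ 1, z) = _
        rw [max_eq_right unitInterval.le_one', L.apply_one]
        rfl
  exact h₀.trans (h₁ ▸ homotopic_curry_zero_one F)

theorem homotopic_of_pr1_homotopic_section {s : C(X, G)}
    (hs : (g.comp s).Homotopic (ContinuousMap.id X)) {u v : C(Z, HPb g f)}
    (h₂ : ((pr2 g f).comp u).Homotopic ((pr2 g f).comp v))
    (hu : ((pr1 g f).comp u).Homotopic (s.comp (f.comp ((pr2 g f).comp v))))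
    (hv : ((pr1 g f).comp v).Homotopic (s.comp (f.comp ((pr2 g f).comp v)))) :
    u.Homotopic v := by
  rw [← whisker_pr1_pr2 u, ← whisker_pr1_pr2 v]
  exact ((homotopic_whisker_slide _ hu.some h₂.some).trans
    (homotopic_whisker_of_section hs.some _ _)).trans
      (homotopic_whisker_slide _ hv.some (ContinuousMap.Homotopy.refl _)).symm

variable {E : Type u} [TopologicalSpace E] {u v : C(Z, E)}

theorem pr1_homotopic_pr2 {r : C(E, Z)} (hu : (r.comp u).Homotopic (ContinuousMap.id Z))
    (hv : (r.comp v).Homotopic (ContinuousMap.id Z)) : (pr1 u v).Homotopic (pr2 u v) :=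
  (hu.symm.comp (.refl (pr1 u v))).trans
    (((ContinuousMap.Homotopic.refl r).comp ⟨evalHomotopy u v⟩).trans (hv.comp (.refl _)))

theorem exists_section_pr1 (h : u.Homotopic v) :
    ∃ s : C(Z, HPb u v), ((pr1 u v).comp s).Homotopic (ContinuousMap.id Z) :=
  ⟨whisker u v (ContinuousMap.id Z) (ContinuousMap.id Z) h.some, .refl _⟩

theorem homotopic_of_isHEpi_pr1 (hepi : IsHEpi (pr1 u v)) (h : (pr1 u v).Homotopic (pr2 u v)) :
    u.Homotopic v :=
  hepi (TopCat.of E) u v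
    (ContinuousMap.Homotopic.trans ⟨evalHomotopy u v⟩
      ((ContinuousMap.Homotopic.refl v).comp h.symm))

end HPb

theorem IsHEpi.of_homotopic_section {X Y : Type u} [TopologicalSpace X] [TopologicalSpace Y]
    {p : C(X, Y)} {s : C(Y, X)} (h : (p.comp s).Homotopic (ContinuousMap.id Y)) : IsHEpi p :=
  fun _ a b hab => ((ContinuousMap.Homotopic.refl a).comp h.symm).trans
    ((hab.comp (.refl s)).trans ((ContinuousMap.Homotopic.refl b).comp h))

theorem section_omega_tfae_general {W A X : Type u} [TopologicalSpace W] [TopologicalSpace A]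
    [TopologicalSpace X] {η β : C(W, A)} (R : RelSusp η β) (f : C(R.S, X)) (m : ℕ)
    (sec : C(X, GaneaG (f.comp R.θ) (1 + m)))
    (hsec : ((ganeaMap (f.comp R.θ) (1 + m)).comp sec).Homotopic (ContinuousMap.id X))
    (Hω : ContinuousMap.Homotopy
      ((ganeaMap (f.comp R.θ) (1 + m)).comp (omega R (f.comp R.θ) f (fun _ => rfl) m)) f)
    (θW : C(R.S, HPb (ganeaMap (f.comp R.θ) (1 + m)) f))
    (hθW : θW = HPb.whisker (ganeaMap (f.comp R.θ) (1 + m)) f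
      (omega R (f.comp R.θ) f (fun _ => rfl) m) (ContinuousMap.id R.S) Hω)
    (sb : C(R.S, HPb (ganeaMap (f.comp R.θ) (1 + m)) f))
    (hsb1 : ((HPb.pr1 (ganeaMap (f.comp R.θ) (1 + m)) f).comp sb).Homotopic (sec.comp f))
    (hsb2 : ((HPb.pr2 (ganeaMap (f.comp R.θ) (1 + m)) f).comp sb).Homotopic
      (ContinuousMap.id R.S)) :
    (HPb.pr1 θW sb).Homotopic (HPb.pr2 θW sb) ∧
    List.TFAE [
      (sec.comp f).Homotopic (omega R (f.comp R.θ) f (fun _ => rfl) m),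
      ∃ s : C(R.S, HPb θW sb), ((HPb.pr1 θW sb).comp s).Homotopic (ContinuousMap.id R.S),
      IsHEpi (HPb.pr1 θW sb),
      θW.Homotopic sb] := by
  have hθ₁ : (HPb.pr1 _ f).comp θW = omega R (f.comp R.θ) f (fun _ => rfl) m := by
    rw [hθW]; rfl
  have hθ₂ : (HPb.pr2 _ f).comp θW = ContinuousMap.id R.S := by rw [hθW]; rfl
  have hsec_f : (sec.comp f).Homotopic (sec.comp (f.comp ((HPb.pr2 _ f).comp sb))) :=
    (ContinuousMap.Homotopic.refl (sec.comp f)).comp hsb2.symm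
  have hπ : (HPb.pr1 θW sb).Homotopic (HPb.pr2 θW sb) :=
    HPb.pr1_homotopic_pr2 (r := HPb.pr2 _ f) (by rw [hθ₂]) hsb2
  refine ⟨hπ, ?_⟩
  tfae_have 1 → 4 := fun h => HPb.homotopic_of_pr1_homotopic_section hsec
    (by rw [hθ₂]; exact hsb2.symm) (by rw [hθ₁]; exact h.symm.trans hsec_f)
    (hsb1.trans hsec_f)
  tfae_have 4 → 1 := fun h => by
    rw [← hθ₁]; exact hsb1.symm.trans ((ContinuousMap.Homotopic.refl _).comp h.symm)
  tfae_have 4 → 2 := HPb.exists_section_pr1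
  tfae_have 2 → 3 := fun ⟨_, hs⟩ => IsHEpi.of_homotopic_section hs
  tfae_have 3 → 4 := fun h => HPb.homotopic_of_isHEpi_pr1 h hπ
  tfae_finish

/-- Let `η, β : W → A`, `f : Σ_A W → X` with `ι_X = f ∘ θ` and
`secat(ι_X) ≤ n` (where `n = 1 + m ≥ 1`), and let `σ : X → G_n(ι_X)` be any homotopy
section of `g_n`. Let `H_n` be the homotopy pullback of `g_n` and `f`, with projections
`f_n = pr1 : H_n → G_n(ι_X)` and `η_n^W = pr2 : H_n → Σ_A W`; let
`θ_n^W = (ω_n, id) : Σ_A W → H_n` be the whisker map (induced by a homotopy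
`g_n ∘ ω_n ≃ f`); let `σ̄ : Σ_A W → H_n` be a whisker map with `f_n ∘ σ̄ ≃ σ ∘ f` and
`η_n^W ∘ σ̄ ≃ id` (arising from the prism lemma); and let `Q` be the homotopy pullback of
`θ_n^W` and `σ̄` with projections `π, π'`. Then `π ≃ π'`, and the following are equivalent:
(i) `σ ∘ f ≃ ω_n`; (ii) `π` admits a homotopy section; (iii) `π` is a homotopy
epimorphism; (iv) `θ_n^W ≃ σ̄`. -/
theorem section_omega_tfae {W A X : Type u} [TopologicalSpace W] [TopologicalSpace A]
    [TopologicalSpace X] {η β : C(W, A)} (R : RelSusp η β) (f : C(R.S, X)) (m : ℕ)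
    (hsecat : secat (f.comp R.θ) ≤ ((1 + m : ℕ) : ℕ∞))
    (sec : C(X, GaneaG (f.comp R.θ) (1 + m)))
    (hsec : ((ganeaMap (f.comp R.θ) (1 + m)).comp sec).Homotopic (ContinuousMap.id X))
    (Hω : ContinuousMap.Homotopy
      ((ganeaMap (f.comp R.θ) (1 + m)).comp (omega R (f.comp R.θ) f (fun _ => rfl) m)) f)
    (θW : C(R.S, HPb (ganeaMap (f.comp R.θ) (1 + m)) f))
    (hθW : θW = HPb.whisker (ganeaMap (f.comp R.θ) (1 + m)) f
      (omega R (f.comp R.θ) f (fun _ => rfl) m) (ContinuousMap.id R.S) Hω)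
    (sb : C(R.S, HPb (ganeaMap (f.comp R.θ) (1 + m)) f))
    (hsb1 : ((HPb.pr1 (ganeaMap (f.comp R.θ) (1 + m)) f).comp sb).Homotopic (sec.comp f))
    (hsb2 : ((HPb.pr2 (ganeaMap (f.comp R.θ) (1 + m)) f).comp sb).Homotopic
      (ContinuousMap.id R.S)) :
    (HPb.pr1 θW sb).Homotopic (HPb.pr2 θW sb) ∧
    List.TFAE [
      (sec.comp f).Homotopic (omega R (f.comp R.θ) f (fun _ => rfl) m),
      ∃ s : C(R.S, HPb θW sb), ((HPb.pr1 θW sb).comp s).Homotopic (ContinuousMap.id R.S),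
      IsHEpi (HPb.pr1 θW sb),
      θW.Homotopic sb] :=
  section_omega_tfae_general R f m sec hsec Hω θW hθW sb hsb1 hsb2
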